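/- Let G be a mean-payoff parity game whose vertex priorities are bounded by an even number d. If the whole vertex set V, viewed as a subgame, has a strategy decomposition for Dis, then there exists a progress measure for G (over some linearly ordered set M). -/

import Mathlib

/-- A mean-payoff parity game on a vertex type `V`: a directed graph in which
every vertex has at least one outgoing edge, a partition of the vertices into
those owned by player Dis (`disOwns v`) and those owned by player Con,
a priority function and an integer cost function on edges. -/
structure MPPGame (V : Type) where
  edge : V → V → Prop
  disOwns : V → Prop
  pri : V → ℕ
  cost : V → V → ℤ
  exists_succ : ∀ v, ∃ u, edge v u

/-- `A`, `B`, `C` partition `W`. -/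
def Partition3 {V : Type} (W A B C : Set V) : Prop :=
  A ∪ B ∪ C = W ∧ Disjoint A B ∧ Disjoint A C ∧ Disjoint B C

/-- Lexicographic order on finite sequences, in which a proper prefix is
smaller than any of its proper extensions. -/
def seqLt {M : Type} (lt : M → M → Prop) : List M → List M → Prop :=
  List.Lex lt

/-- The `p`-truncation of a sequence `⟨m_{d-1}, m_{d-3}, …, m_ℓ⟩` (indexed by
odd numbers from `d-1` downwards): keep only the components `m_i` with `i ≥ p`. -/
def trunc {M : Type} (d p : ℕ) (s : List M) : List M :=
  s.take ((d + 1 - p) / 2)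

/-- The order on finite binary strings: `0s < ε`, `ε < 1s`, and
`bs < bs'` iff `s < s'`. -/
def binLt : List Bool → List Bool → Prop
  | [], [] => False
  | false :: _, [] => True
  | true :: _, [] => False
  | [], false :: _ => False
  | [], true :: _ => True
  | a :: s, b :: t => (a = false ∧ b = true) ∨ (a = b ∧ binLt s t)

/-- Membership in `S_{n,d}`: sequences `⟨m_{d-1}, …, m_ℓ⟩` of binary strings
with `ℓ` odd, `1 ≤ ℓ ≤ d+1` (equivalently `2·len ≤ d`) and total length at
most `⌈log₂ n⌉`. -/
def inSnd (n d : ℕ) (s : List (List Bool)) : Prop :=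
  2 * s.length ≤ d ∧ (s.map List.length).sum ≤ Nat.clog 2 n

namespace MPPGame

variable {V : Type}

/-- An infinite play: each consecutive pair is an edge. -/
def Play (G : MPPGame V) (p : ℕ → V) : Prop :=
  ∀ i, G.edge (p i) (p (i + 1))

/-- An infinite play that stays in the subgame induced by `W`. -/
def PlayIn (G : MPPGame V) (W : Set V) (p : ℕ → V) : Prop :=
  (∀ i, p i ∈ W) ∧ ∀ i, G.edge (p i) (p (i + 1))

/-- The mean payoff of a play: the limit superior of the averages of the
partial sums of the edge costs. -/
noncomputable def meanPayoff (G : MPPGame V) (p : ℕ → V) : ℝ :=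
  Filter.limsup
    (fun N => (∑ i ∈ Finset.range N, (G.cost (p i) (p (i + 1)) : ℝ)) / (N : ℝ))
    Filter.atTop

/-- Priority `k` occurs infinitely often along the play `p`. -/
def InfOften (G : MPPGame V) (p : ℕ → V) (k : ℕ) : Prop :=
  ∀ N, ∃ i, N ≤ i ∧ G.pri (p i) = k

/-- A play is winning for Con if the highest priority occurring infinitely
often is odd and the mean payoff is negative. -/
def ConWinsPlay (G : MPPGame V) (p : ℕ → V) : Prop :=
  (∃ k, Odd k ∧ G.InfOften p k ∧ ∀ j, G.InfOften p j → j ≤ k) ∧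
    G.meanPayoff p < 0

/-- A play is winning for Dis iff it is not winning for Con. -/
def DisWinsPlay (G : MPPGame V) (p : ℕ → V) : Prop :=
  ¬ G.ConWinsPlay p

/-- A (history-dependent) strategy for Dis: given the list of previously
visited vertices and the current vertex (owned by Dis), it picks a successor
along an edge. -/
def DisStrategy (G : MPPGame V) (σ : List V → V → V) : Prop :=
  ∀ h v, G.disOwns v → G.edge v (σ h v)

/-- A (history-dependent) strategy for Con. -/
def ConStrategy (G : MPPGame V) (σ : List V → V → V) : Prop :=
  ∀ h v, ¬ G.disOwns v → G.edge v (σ h v)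

/-- A play is consistent with a strategy `σ` of Dis. -/
def ConsistentDis (G : MPPGame V) (σ : List V → V → V) (p : ℕ → V) : Prop :=
  ∀ i, G.disOwns (p i) → p (i + 1) = σ ((List.range i).map p) (p i)

/-- A play is consistent with a strategy `σ` of Con. -/
def ConsistentCon (G : MPPGame V) (σ : List V → V → V) (p : ℕ → V) : Prop :=
  ∀ i, ¬ G.disOwns (p i) → p (i + 1) = σ ((List.range i).map p) (p i)

/-- A positional strategy for Dis. -/
def PosDisStrategy (G : MPPGame V) (σ : V → V) : Prop :=
  ∀ v, G.disOwns v → G.edge v (σ v)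

/-- A positional strategy for Con. -/
def PosConStrategy (G : MPPGame V) (σ : V → V) : Prop :=
  ∀ v, ¬ G.disOwns v → G.edge v (σ v)

/-- A play is consistent with a positional strategy `σ` of Dis. -/
def ConsistentDisPos (G : MPPGame V) (σ : V → V) (p : ℕ → V) : Prop :=
  ∀ i, G.disOwns (p i) → p (i + 1) = σ (p i)

/-- A play is consistent with a positional strategy `σ` of Con. -/
def ConsistentConPos (G : MPPGame V) (σ : V → V) (p : ℕ → V) : Prop :=
  ∀ i, ¬ G.disOwns (p i) → p (i + 1) = σ (p i)

/-- The strategy `σ` of Dis is winning for Dis from `v`. -/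
def DisWinsFrom (G : MPPGame V) (σ : List V → V → V) (v : V) : Prop :=
  ∀ p, G.Play p → p 0 = v → G.ConsistentDis σ p → G.DisWinsPlay p

/-- The strategy `σ` of Con is winning for Con from `v`. -/
def ConWinsFrom (G : MPPGame V) (σ : List V → V → V) (v : V) : Prop :=
  ∀ p, G.Play p → p 0 = v → G.ConsistentCon σ p → G.ConWinsPlay p

/-- The positional strategy `σ` of Dis is winning for Dis from `v`. -/
def DisWinsFromPos (G : MPPGame V) (σ : V → V) (v : V) : Prop :=
  ∀ p, G.Play p → p 0 = v → G.ConsistentDisPos σ p → G.DisWinsPlay p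

/-- The positional strategy `σ` of Con is winning for Con from `v`. -/
def ConWinsFromPos (G : MPPGame V) (σ : V → V) (v : V) : Prop :=
  ∀ p, G.Play p → p 0 = v → G.ConsistentConPos σ p → G.ConWinsPlay p

/-- `W` is a trap for Con: every Con vertex of `W` has all its outgoing edges
into `W`, and every Dis vertex of `W` has at least one outgoing edge into `W`. -/
def TrapForCon (G : MPPGame V) (W : Set V) : Prop :=
  ∀ v ∈ W, (¬ G.disOwns v → ∀ u, G.edge v u → u ∈ W) ∧
    (G.disOwns v → ∃ u ∈ W, G.edge v u)

/-- `W` is a trap for Dis. -/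
def TrapForDis (G : MPPGame V) (W : Set V) : Prop :=
  ∀ v ∈ W, (G.disOwns v → ∀ u, G.edge v u → u ∈ W) ∧
    (¬ G.disOwns v → ∃ u ∈ W, G.edge v u)

/-- `R` is a trap for Con inside the subgame induced by `W` (only edges
within `W` count for Con). -/
def TrapForConIn (G : MPPGame V) (W R : Set V) : Prop :=
  ∀ v ∈ R, (¬ G.disOwns v → ∀ u ∈ W, G.edge v u → u ∈ R) ∧
    (G.disOwns v → ∃ u ∈ R, G.edge v u)

/-- `R` is a trap for Dis inside the subgame induced by `W`. -/
def TrapForDisIn (G : MPPGame V) (W R : Set V) : Prop :=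
  ∀ v ∈ R, (G.disOwns v → ∀ u ∈ W, G.edge v u → u ∈ R) ∧
    (¬ G.disOwns v → ∃ u ∈ R, G.edge v u)

/-- `W` induces a subgame: it is nonempty and every vertex of `W` has an
outgoing edge within `W`. -/
def IsSubgame (G : MPPGame V) (W : Set V) : Prop :=
  W.Nonempty ∧ ∀ v ∈ W, ∃ u ∈ W, G.edge v u

/-- `τ` is a positional reachability strategy for Dis from `T` to `B` in the
subgame `W`: it is a legal positional strategy within `W`, and every
consistent play in `W` starting in `T` reaches `B`. -/
def DisReach (G : MPPGame V) (W T B : Set V) (τ : V → V) : Prop :=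
  (∀ v ∈ W, G.disOwns v → G.edge v (τ v) ∧ τ v ∈ W) ∧
    ∀ p, G.PlayIn W p → p 0 ∈ T → G.ConsistentDisPos τ p → ∃ i, p i ∈ B

/-- `τ` is a positional reachability strategy for Con from `T` to `B` in `W`. -/
def ConReach (G : MPPGame V) (W T B : Set V) (τ : V → V) : Prop :=
  (∀ v ∈ W, ¬ G.disOwns v → G.edge v (τ v) ∧ τ v ∈ W) ∧
    ∀ p, G.PlayIn W p → p 0 ∈ T → G.ConsistentConPos τ p → ∃ i, p i ∈ B

/-- `σ` is a positional strategy for Dis that is mean-payoff winning for Dis on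
`R`: every consistent play in `R` has limsup average cost `≥ 0`. -/
def DisMPWin (G : MPPGame V) (R : Set V) (σ : V → V) : Prop :=
  (∀ v ∈ R, G.disOwns v → G.edge v (σ v) ∧ σ v ∈ R) ∧
    ∀ p, G.PlayIn R p → G.ConsistentDisPos σ p → 0 ≤ G.meanPayoff p

/-- `σ` is a positional strategy for Con that is mean-payoff winning for Con on
`R`: every consistent play in `R` has limsup average cost `< 0`. -/
def ConMPWin (G : MPPGame V) (R : Set V) (σ : V → V) : Prop :=
  (∀ v ∈ R, ¬ G.disOwns v → G.edge v (σ v) ∧ σ v ∈ R) ∧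
    ∀ p, G.PlayIn R p → G.ConsistentConPos σ p → G.meanPayoff p < 0

/-- `DisDecomp G b W` : the subgame `W`, whose highest priority is `b`, has a
`b`-decomposition for Dis.  (The disjunctions in the textbook definition are
split into separate constructors, and "`X` is empty or recursively has a
decomposition" is encoded as `X.Nonempty → DisDecomp G _ X`.) -/
inductive DisDecomp (G : MPPGame V) : ℕ → Set V → Prop where
  | even (b b' : ℕ) (W R T B : Set V) (τ : V → V)
      (hb : Even b) (hsub : G.IsSubgame W)
      (hpart : Partition3 W R T B)
      (hB : B = {v | v ∈ W ∧ G.pri v = b}) (hBne : B.Nonempty)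
      (htop : ∀ v ∈ W, G.pri v ≤ b)
      (hreach : G.DisReach W T B τ)
      (hb' : R.Nonempty → b' < b)
      (hR : R.Nonempty → DisDecomp G b' R) :
      DisDecomp G b W
  | oddRec (b b' b'' : ℕ) (W U T R : Set V) (τ : V → V)
      (hb : Odd b) (hsub : G.IsSubgame W)
      (hpart : Partition3 W U T R)
      (htop : ∀ v ∈ W, G.pri v ≤ b) (htop' : ∃ v ∈ W, G.pri v = b)
      (hRne : R.Nonempty) (htrap : G.TrapForConIn W R)
      (hb1 : b' < b) (hR : DisDecomp G b' R)
      (hreach : G.DisReach W T R τ)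
      (hb2 : U.Nonempty → b'' ≤ b)
      (hU : U.Nonempty → DisDecomp G b'' U) :
      DisDecomp G b W
  | oddMP (b b'' : ℕ) (W U T R : Set V) (τ σ : V → V)
      (hb : Odd b) (hsub : G.IsSubgame W)
      (hpart : Partition3 W U T R)
      (htop : ∀ v ∈ W, G.pri v ≤ b) (htop' : ∃ v ∈ W, G.pri v = b)
      (hRne : R.Nonempty) (htrap : G.TrapForConIn W R)
      (hsig : G.DisMPWin R σ)
      (hreach : G.DisReach W T R τ)
      (hb2 : U.Nonempty → b'' ≤ b)
      (hU : U.Nonempty → DisDecomp G b'' U) :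
      DisDecomp G b W

/-- `ConDecomp G b W` : the subgame `W`, whose highest priority is `b`, has a
`b`-decomposition for Con.  ("`X` is empty or recursively has a decomposition"
is encoded as `X.Nonempty → ConDecomp G _ X`.) -/
inductive ConDecomp (G : MPPGame V) : ℕ → Set V → Prop where
  | odd (b b' : ℕ) (W R T B : Set V) (τ lam : V → V)
      (hb : Odd b) (hsub : G.IsSubgame W)
      (hpart : Partition3 W R T B)
      (hB : B = {v | v ∈ W ∧ G.pri v = b}) (hBne : B.Nonempty)
      (htop : ∀ v ∈ W, G.pri v ≤ b)
      (hreach : G.ConReach W T B τ)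
      (hb' : R.Nonempty → b' < b)
      (hR : R.Nonempty → ConDecomp G b' R)
      (hlam : G.ConMPWin W lam) :
      ConDecomp G b W
  | even (b b' b'' : ℕ) (W U T R : Set V) (τ : V → V)
      (hb : Even b) (hsub : G.IsSubgame W)
      (hpart : Partition3 W U T R)
      (htop : ∀ v ∈ W, G.pri v ≤ b) (htop' : ∃ v ∈ W, G.pri v = b)
      (hRne : R.Nonempty) (htrap : G.TrapForDisIn W R)
      (hb1 : b' < b) (hR : ConDecomp G b' R)
      (hreach : G.ConReach W T R τ)
      (hb2 : U.Nonempty → b'' ≤ b)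
      (hU : U.Nonempty → ConDecomp G b'' U) :
      ConDecomp G b W

/-- The maximum absolute value of the cost of an edge of the subgame induced
by `W` (and `0` if there is none). -/
noncomputable def maxCostOn (G : MPPGame V) (W : Set V) : ℕ :=
  sSup {n : ℕ | ∃ v ∈ W, ∃ u ∈ W, G.edge v u ∧ n = (G.cost v u).natAbs}

/-- The edge `(v, u)` is progressive in the progress labelling `(μ, φ)`
(with priorities bounded by the even number `d`, over an ordered set with
strict order `lt`). -/
def Progressive {M : Type} (G : MPPGame V) (d : ℕ) (lt : M → M → Prop)
    (μ : V → List M) (φ : V → WithTop ℤ) (v u : V) : Prop :=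
  seqLt lt (trunc d (G.pri v) (μ u)) (μ v) ∨
  (trunc d (G.pri v) (μ u) = μ v ∧ Even (G.pri v) ∧ φ v = ⊤) ∨
  (μ u = μ v ∧ φ v ≠ ⊤ ∧ φ u ≤ φ v + (G.cost v u : WithTop ℤ))

/-- `(μ, φ)` is a progress labelling on the subgame induced by `W`:
`μ v` represents the sequence `⟨m_{d-1}, m_{d-3}, …, m_ℓ⟩` (so that
`d + 1 = 2·(μ v).length + ℓ` with `ℓ` odd and `ℓ ≥ π(v)`);
if `φ v = ∞` then `ℓ` is the least odd integer `≥ π(v)`; and if `φ v ≠ ∞`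
then `0 ≤ φ v ≤ n·C`, where `n` is the number of vertices of the subgame and
`C` the maximum absolute value of an edge cost of the subgame. -/
def IsProgressLabellingOn {M : Type} (G : MPPGame V) (W : Set V) (d : ℕ)
    (μ : V → List M) (φ : V → WithTop ℤ) : Prop :=
  ∀ v ∈ W,
    (∃ l, Odd l ∧ G.pri v ≤ l ∧ d + 1 = 2 * (μ v).length + l) ∧
    (φ v = ⊤ → d + 1 ≤ 2 * (μ v).length + G.pri v + 1) ∧
    (φ v ≠ ⊤ → 0 ≤ φ v ∧
      φ v ≤ (((W.ncard * G.maxCostOn W : ℕ) : ℤ) : WithTop ℤ))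

/-- `(μ, φ)` is a progress measure on the subgame induced by `W`: a progress
labelling such that every Dis vertex has a progressive outgoing edge in the
subgame, and every outgoing edge of a Con vertex in the subgame is progressive. -/
def IsProgressMeasureOn {M : Type} (G : MPPGame V) (W : Set V) (d : ℕ)
    (lt : M → M → Prop) (μ : V → List M) (φ : V → WithTop ℤ) : Prop :=
  G.IsProgressLabellingOn W d μ φ ∧
  (∀ v ∈ W, G.disOwns v → ∃ u ∈ W, G.edge v u ∧ G.Progressive d lt μ φ v u) ∧
  (∀ v ∈ W, ¬ G.disOwns v → ∀ u ∈ W, G.edge v u → G.Progressive d lt μ φ v u)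

end MPPGame

/-!
Induction on the decomposition of a subgame `W` with top priority `b`, building a measure for
the bound `d = evenCeil b`. The target `Z` of the decomposition (the vertices of priority `b`
for even `b`, the Con-trap `R` for odd `b`) keeps labels of its own; the vertices that Dis's
reachability strategy attracts to `Z` get their attractor rank as top component; the remaining
vertices lie in the recursively decomposed part, whose measure gets a number above all ranks
prefixed to its top component, so that their moves into `Z` or the attractor are progressive.
Components are lists of naturals ordered lexicographically, which makes such prefixing
order-preserving, and empty top components lift a measure to a larger bound.

When `R` is mean-payoff winning for Dis via `σ`, its second components form an energy
potential: the largest negated cost of a `σ`-walk from the vertex. It is bounded by `|R|·C`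
because `σ`-cycles cost at least `0`: a cheaper one, repeated, is a play consistent with `σ` of
negative mean payoff.
-/

open Finset Filter Topology

def evenCeil (b : ℕ) : ℕ := b + b % 2

lemma even_evenCeil (b : ℕ) : Even (evenCeil b) := by
  rw [Nat.even_iff, evenCeil]; omega

section Sequences

def pad (g : ℕ) (s : List (List ℕ)) : List (List ℕ) := List.replicate g [] ++ s

def raise (a : ℕ) : List (List ℕ) → List (List ℕ)
  | [] => []
  | c :: s => (a :: c) :: s

lemma pad_strictMono (g : ℕ) : StrictMono (pad g) :=
  fun _ _ h => List.Lex.append_left _ h _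

lemma raise_strictMono (a : ℕ) : StrictMono (raise a) := by
  rintro _ _ (_ | h | h)
  · exact List.nil_lt_cons _ _
  · exact List.Lex.rel (List.Lex.cons h)
  · exact List.Lex.cons h

@[simp] lemma length_pad (g : ℕ) (s : List (List ℕ)) : (pad g s).length = g + s.length := by
  simp [pad]

@[simp] lemma length_raise (a : ℕ) (s : List (List ℕ)) : (raise a s).length = s.length := by
  cases s <;> rfl

@[simp] lemma raise_eq_nil {a : ℕ} {s : List (List ℕ)} : raise a s = [] ↔ s = [] := by
  cases s <;> simp [raise]

lemma trunc_pad {d p : ℕ} (g : ℕ) (s : List (List ℕ)) (hp : p ≤ d + 1) :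
    trunc (d + 2 * g) p (pad g s) = pad g (trunc d p s) := by
  rw [trunc, trunc, show (d + 2 * g + 1 - p) / 2 = g + (d + 1 - p) / 2 by omega]
  simp [pad, List.take_append]

lemma trunc_raise (d p a : ℕ) (s : List (List ℕ)) :
    trunc d p (raise a s) = raise a (trunc d p s) := by
  rw [trunc, trunc]
  cases s <;> cases (d + 1 - p) / 2 <;> rfl

lemma headI_raise_lt (a : ℕ) (s : List (List ℕ)) : (raise a s).headI < [a + 1] := by
  cases s
  · exact List.nil_lt_cons _ _
  · exact List.Lex.rel (Nat.lt_succ_self a)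

lemma lt_headI_raise {s : List (List ℕ)} {t : List ℕ} {a : ℕ} (hs : s ≠ []) (ht : t < [a]) :
    t < (raise a s).headI := by
  obtain ⟨c, s, rfl⟩ := List.exists_cons_of_ne_nil hs
  rcases ht with _ | h | h
  · exact List.nil_lt_cons _ _
  · exact List.Lex.rel h
  · exact absurd h (List.not_lt_nil _)

lemma lt_singleton_of_le {t : List ℕ} {a b : ℕ} (ht : t < [a]) (hab : a ≤ b) : t < [b] := by
  rcases ht with _ | h | h
  · exact List.nil_lt_cons _ _
  · exact List.Lex.rel (by omega)
  · exact absurd h (List.not_lt_nil _)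

end Sequences

lemma exists_seq_of_forall_exists {α : Type*} {S : Set α} {r : α → α → Prop}
    (h : ∀ x ∈ S, ∃ y ∈ S, r x y) {a : α} (ha : a ∈ S) :
    ∃ p : ℕ → α, p 0 = a ∧ ∀ i, p i ∈ S ∧ r (p i) (p (i + 1)) := by
  choose f hfS hfr using h
  let g : S → S := fun x => ⟨f x x.2, hfS x x.2⟩
  refine ⟨fun i => (g^[i] ⟨a, ha⟩).1, rfl, fun i => ⟨(g^[i] ⟨a, ha⟩).2, ?_⟩⟩
  simp only [Function.iterate_succ_apply']
  exact hfr _ _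

lemma exists_lt_eq_of_ncard_le {α : Type*} {R : Set α} (hR : R.Finite) {f : ℕ → α} {L : ℕ}
    (hf : ∀ t ≤ L, f t ∈ R) (hL : R.ncard ≤ L) : ∃ i j, i < j ∧ j ≤ L ∧ f j = f i := by
  obtain ⟨x, hx, y, hy, hxy, hfxy⟩ := exists_ne_map_eq_of_card_lt_of_maps_to
    (s := range (L + 1)) (t := hR.toFinset)
    (by rw [← Set.ncard_eq_toFinset_card R hR, card_range]; omega)
    (fun t ht => by simpa using hf t (by simp at ht; omega))
  rw [mem_range] at hx hy
  rcases lt_or_gt_of_ne hxy with h | h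
  · exact ⟨x, y, h, by omega, hfxy.symm⟩
  · exact ⟨y, x, h, by omega, hfxy⟩

namespace Function.Periodic

lemma sum_range_mul_add {M : Type*} [AddCommMonoid M] {h : ℕ → M} {k : ℕ} (hh : Periodic h k)
    (q r : ℕ) : ∑ t ∈ range (q * k + r), h t = q • ∑ t ∈ range k, h t + ∑ t ∈ range r, h t := by
  induction q with
  | zero => simp
  | succ q ih =>
    rw [show (q + 1) * k + r = k + (q * k + r) by ring, sum_range_add]
    simp only [fun x => show h (k + x) = h x by rw [add_comm]; exact hh x]
    rw [ih, succ_nsmul', add_assoc]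

lemma tendsto_sum_range_div {h : ℕ → ℝ} {k : ℕ} (hh : Periodic h k) (hk : 0 < k) :
    Tendsto (fun N : ℕ => (∑ t ∈ range N, h t) / N) atTop (𝓝 ((∑ t ∈ range k, h t) / k)) := by
  set c := ∑ t ∈ range k, h t
  set E : ℕ → ℝ := fun r => ∑ t ∈ range r, h t - r * c / k
  have hE : ∀ N, 0 < N → (∑ t ∈ range N, h t) / N = c / k + E (N % k) / N := by
    intro N hN
    have hk' : (k : ℝ) ≠ 0 := by positivity
    have hN' : (N : ℝ) ≠ 0 := by positivity
    have hdiv : (N : ℝ) = (N / k : ℕ) * k + (N % k : ℕ) := by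
      exact_mod_cast (Nat.div_add_mod' N k).symm
    have hsum := hh.sum_range_mul_add (N / k) (N % k)
    rw [Nat.div_add_mod', nsmul_eq_mul] at hsum
    rw [hsum]
    simp only [E]
    field_simp
    rw [hdiv]
    ring
  have hbdd : ∀ N : ℕ, ‖E (N % k) / N‖ ≤ (∑ r ∈ range k, |E r|) / N := by
    intro N
    rw [norm_div, Real.norm_eq_abs, Real.norm_natCast]
    gcongr
    exact single_le_sum (f := fun r => |E r|) (fun _ _ => abs_nonneg _)
      (mem_range.2 (Nat.mod_lt N hk))
  have := (tendsto_const_nhds (x := c / k)).add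
    (squeeze_zero_norm hbdd (tendsto_const_div_atTop_nhds_zero_nat _))
  rw [add_zero] at this
  exact this.congr' (eventually_atTop.2 ⟨1, fun N hN => (hE N hN).symm⟩)

end Function.Periodic

section Walks

variable {V : Type} (r : V → V → Prop) (w : V → V → ℤ)

def IsWalk (f : ℕ → V) (L : ℕ) : Prop := ∀ t < L, r (f t) (f (t + 1))

def walkWeight (f : ℕ → V) (L : ℕ) : ℤ := ∑ t ∈ range L, w (f t) (f (t + 1))

variable {r w}

lemma isWalk_add {f : ℕ → V} {a b : ℕ} :
    IsWalk r f (a + b) ↔ IsWalk r f a ∧ IsWalk r (fun t => f (a + t)) b := by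
  refine ⟨fun h => ⟨fun t ht => h t (by omega), fun t ht => ?_⟩, fun ⟨h₁, h₂⟩ t ht => ?_⟩
  · simpa only [add_assoc] using h (a + t) (by omega)
  · rcases lt_or_ge t a with hta | hta
    · exact h₁ t hta
    · obtain ⟨s, rfl⟩ := Nat.exists_eq_add_of_le hta
      simpa only [add_assoc] using h₂ s (by omega)

lemma walkWeight_add (f : ℕ → V) (a b : ℕ) :
    walkWeight w f (a + b) = walkWeight w f a + walkWeight w (fun t => f (a + t)) b := by
  simp only [walkWeight, sum_range_add, add_assoc]

/-- Cutting the closed subwalk from time `i` to time `i + m` out of a walk. -/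
lemma IsWalk.splice {f : ℕ → V} {i m l : ℕ} (hf : IsWalk r f (i + m + l))
    (hfi : f (i + m) = f i) :
    ∃ g : ℕ → V, g 0 = f 0 ∧ IsWalk r g (i + l) ∧
      walkWeight w f (i + m + l) = walkWeight w g (i + l) + walkWeight w (fun t => f (i + t)) m := by
  set g : ℕ → V := fun t => if t ≤ i then f t else f (t + m)
  have hpre : ∀ t ≤ i, g t = f t := fun t ht => if_pos ht
  have hshift : (fun t => g (i + t)) = fun t => f (i + m + t) := funext fun t => by
    rcases t with _ | t
    · simp [g, hfi]
    · simp only [g, if_neg (show ¬ i + (t + 1) ≤ i by omega)]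
      ring_nf
  have hprefix : walkWeight w g i = walkWeight w f i := sum_congr rfl fun t ht => by
    rw [hpre t (mem_range.1 ht).le, hpre (t + 1) (mem_range.1 ht)]
  obtain ⟨⟨hf₁, -⟩, hf₂⟩ := isWalk_add.1 hf |>.imp_left isWalk_add.1
  refine ⟨g, hpre 0 (Nat.zero_le i), isWalk_add.2 ⟨fun t ht => ?_, hshift ▸ hf₂⟩, ?_⟩
  · rw [hpre t ht.le, hpre (t + 1) ht]
    exact hf₁ t ht
  · rw [walkWeight_add, walkWeight_add, walkWeight_add g, hshift, hprefix]
    ring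

/-- Cutting out cycles, which weigh at least `0`, shrinks a walk inside `R` to one of fewer than
`|R|` steps, each weighing at least `-C`. -/
lemma neg_walkWeight_le [Finite V] {R : Set V} {C : ℕ}
    (hr : ∀ x y, r x y → y ∈ R ∧ -(C : ℤ) ≤ w x y)
    (hcyc : ∀ f k, IsWalk r f k → f k = f 0 → 0 ≤ walkWeight w f k) :
    ∀ L f, IsWalk r f L → f 0 ∈ R → -walkWeight w f L ≤ R.ncard * C := by
  intro L
  induction L using Nat.strong_induction_on with
  | _ L ih =>
  intro f hf hf0
  rcases lt_or_ge L R.ncard with hL | hL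
  · calc -walkWeight w f L = ∑ t ∈ range L, -w (f t) (f (t + 1)) := by
          rw [walkWeight, sum_neg_distrib]
      _ ≤ ∑ t ∈ range L, (C : ℤ) := sum_le_sum fun t ht => by
          have := (hr _ _ (hf t (mem_range.1 ht))).2
          omega
      _ ≤ R.ncard * C := by
          rw [sum_const, card_range, nsmul_eq_mul]
          gcongr
  have hfR : ∀ t ≤ L, f t ∈ R := fun t ht => by
    rcases t with _ | t
    · exact hf0
    · exact (hr _ _ (hf t (by omega))).1
  obtain ⟨i, j, hij, hjL, hfij⟩ := exists_lt_eq_of_ncard_le R.toFinite hfR hL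
  obtain ⟨m, rfl⟩ : ∃ m, j = i + m := ⟨j - i, by omega⟩
  obtain ⟨l, rfl⟩ : ∃ l, L = i + m + l := ⟨L - (i + m), by omega⟩
  obtain ⟨g, hg0, hg, hweight⟩ := hf.splice (w := w) hfij
  have hcycle := hcyc _ m (isWalk_add.1 (isWalk_add.1 hf).1).2 (by simpa using hfij)
  have := ih (i + l) (by omega) g hg (hg0 ▸ hf0)
  rw [hweight]
  linarith

lemma exists_potential_of_walkWeight_bdd {R : Set V} {B : ℤ} (hr : ∀ x y, r x y → y ∈ R)
    (hB : ∀ L f, IsWalk r f L → f 0 ∈ R → -walkWeight w f L ≤ B) :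
    ∃ φ : V → ℤ, ∀ v ∈ R, 0 ≤ φ v ∧ φ v ≤ B ∧ ∀ u, r v u → φ u ≤ φ v + w v u := by
  have hnil : ∀ v, ∃ L f, f 0 = v ∧ IsWalk r f L ∧ (0 : ℤ) = -walkWeight w f L :=
    fun v => ⟨0, fun _ => v, rfl, fun t ht => absurd ht (Nat.not_lt_zero t), by simp [walkWeight]⟩
  have hex : ∀ v ∈ R, ∃ z, (∃ L f, f 0 = v ∧ IsWalk r f L ∧ z = -walkWeight w f L) ∧
      ∀ z', (∃ L f, f 0 = v ∧ IsWalk r f L ∧ z' = -walkWeight w f L) → z' ≤ z :=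
    fun v hv => Int.exists_greatest_of_bdd
      ⟨B, by rintro _ ⟨L, f, rfl, hf, rfl⟩; exact hB L f hf hv⟩ ⟨0, hnil v⟩
  choose! φ hφ hφmax using hex
  refine ⟨φ, fun v hv => ⟨hφmax v hv 0 (hnil v), ?_, fun u hvu => ?_⟩⟩
  · obtain ⟨L, f, rfl, hf, h⟩ := hφ _ hv
    exact h ▸ hB L f hf hv
  · obtain ⟨L, f, rfl, hf, h⟩ := hφ u (hr v _ hvu)
    set g : ℕ → V := fun t => if t = 0 then v else f (t - 1)
    have hg : (fun t => g (1 + t)) = f := funext fun t => by simp [g]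
    have h₁ : walkWeight w g 1 = w v (f 0) := by simp [walkWeight, g]
    have := hφmax v hv (-walkWeight w g (1 + L))
      ⟨1 + L, g, rfl, isWalk_add.2 ⟨fun t ht => by simpa [g, Nat.lt_one_iff.1 ht] using hvu,
        hg ▸ hf⟩, rfl⟩
    rw [walkWeight_add, hg, h₁] at this
    linarith

end Walks

namespace MPPGame

variable {V : Type} {G : MPPGame V}

section Progressive

variable {d : ℕ} {μ : V → List (List ℕ)} {φ φ' : V → WithTop ℤ} {v u : V}

lemma Progressive.congr {M : Type} {lt : M → M → Prop} {μ μ' : V → List M}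
    (h : G.Progressive d lt μ φ v u) (hv : μ' v = μ v) (hu : μ' u = μ u)
    (hφv : φ' v = φ v) (hφu : φ' u = φ u) : G.Progressive d lt μ' φ' v u := by
  unfold Progressive; rwa [hv, hu, hφv, hφu]

lemma Progressive.pad (g : ℕ) (hp : G.pri v ≤ d + 1) (h : G.Progressive d (· < ·) μ φ v u) :
    G.Progressive (d + 2 * g) (· < ·) (pad g ∘ μ) φ v u := by
  rcases h with h | ⟨h, heven, htop⟩ | ⟨h, hfin, hle⟩
  · left
    change (_ : List (List ℕ)) < _
    rw [Function.comp_apply, trunc_pad g _ hp]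
    exact pad_strictMono g h
  · exact Or.inr (Or.inl ⟨by simp only [Function.comp_apply, trunc_pad g _ hp, h], heven, htop⟩)
  · exact Or.inr (Or.inr ⟨by simp only [Function.comp_apply, h], hfin, hle⟩)

lemma Progressive.raise (a : ℕ) (h : G.Progressive d (· < ·) μ φ v u) :
    G.Progressive d (· < ·) (raise a ∘ μ) φ v u := by
  rcases h with h | ⟨h, heven, htop⟩ | ⟨h, hfin, hle⟩
  · left
    change (_ : List (List ℕ)) < _
    rw [Function.comp_apply, trunc_raise]
    exact raise_strictMono a h
  · exact Or.inr (Or.inl ⟨by simp only [Function.comp_apply, trunc_raise, h], heven, htop⟩)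
  · exact Or.inr (Or.inr ⟨by simp only [Function.comp_apply, h], hfin, hle⟩)

lemma progressive_of_headI_lt (hv : G.pri v < d) (hne : μ v ≠ [])
    (h : (μ u).headI < (μ v).headI) : G.Progressive d (· < ·) μ φ v u := by
  left
  change trunc d (G.pri v) (μ u) < μ v
  obtain ⟨cv, sv, hcv⟩ := List.exists_cons_of_ne_nil hne
  obtain ⟨k, hk⟩ : ∃ k, (d + 1 - G.pri v) / 2 = k + 1 := ⟨(d + 1 - G.pri v) / 2 - 1, by omega⟩
  rw [hcv] at h ⊢
  rw [trunc, hk]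
  cases hu : μ u with
  | nil => exact List.nil_lt_cons _ _
  | cons cu su =>
    rw [hu] at h
    exact List.Lex.rel h

lemma progressive_of_pri_eq {M : Type} {lt : M → M → Prop} {μ : V → List M} (hd : Even d)
    (hv : G.pri v = d) (hμ : μ v = []) (hφ : φ v = ⊤) : G.Progressive d lt μ φ v u :=
  Or.inr (Or.inl ⟨by rw [trunc, hv, hμ, show (d + 1 - d) / 2 = 0 by omega, List.take_zero],
    hv ▸ hd, hφ⟩)

end Progressive

section CostBound

variable [Finite V]

lemma natAbs_cost_le_maxCostOn {W : Set V} {v u : V} (hv : v ∈ W) (hu : u ∈ W)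
    (he : G.edge v u) : (G.cost v u).natAbs ≤ G.maxCostOn W :=
  le_csSup ((Set.finite_range fun e : V × V => (G.cost e.1 e.2).natAbs).bddAbove.mono
    (by rintro _ ⟨v, -, u, -, -, rfl⟩; exact ⟨(v, u), rfl⟩)) ⟨v, hv, u, hu, he, rfl⟩

lemma neg_maxCostOn_le_cost {W : Set V} {v u : V} (hv : v ∈ W) (hu : u ∈ W)
    (he : G.edge v u) : -(G.maxCostOn W : ℤ) ≤ G.cost v u := by
  have := natAbs_cost_le_maxCostOn hv hu he
  omega

lemma maxCostOn_mono {R W : Set V} (h : R ⊆ W) : G.maxCostOn R ≤ G.maxCostOn W :=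
  csSup_le_csSup' ((Set.finite_range fun e : V × V => (G.cost e.1 e.2).natAbs).bddAbove.mono
    (by rintro _ ⟨v, -, u, -, -, rfl⟩; exact ⟨(v, u), rfl⟩))
    (by rintro _ ⟨v, hv, u, hu, he, rfl⟩; exact ⟨v, h hv, u, h hu, he, rfl⟩)

lemma coe_ncard_mul_maxCostOn_mono {R W : Set V} (h : R ⊆ W) :
    (((R.ncard * G.maxCostOn R : ℕ) : ℤ) : WithTop ℤ) ≤ ((W.ncard * G.maxCostOn W : ℕ) : ℤ) := by
  exact_mod_cast Nat.mul_le_mul (Set.ncard_le_ncard h) (maxCostOn_mono h)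

end CostBound

section Measure

/-- The conditions of a progress measure at `v`, plus `nil`, which keeps the sequence of every
vertex of priority `< d` nonempty. -/
structure MeasureAt (G : MPPGame V) (W : Set V) (d : ℕ) (μ : V → List (List ℕ))
    (φ : V → WithTop ℤ) (v : V) : Prop where
  length : ∃ l, Odd l ∧ G.pri v ≤ l ∧ d + 1 = 2 * (μ v).length + l
  top : φ v = ⊤ → d + 1 ≤ 2 * (μ v).length + G.pri v + 1
  bound : φ v ≠ ⊤ → 0 ≤ φ v ∧ φ v ≤ (((W.ncard * G.maxCostOn W : ℕ) : ℤ) : WithTop ℤ)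
  dis : G.disOwns v → ∃ u ∈ W, G.edge v u ∧ G.Progressive d (· < ·) μ φ v u
  con : ¬ G.disOwns v → ∀ u ∈ W, G.edge v u → G.Progressive d (· < ·) μ φ v u
  nil : μ v = [] → φ v = ⊤

variable {W U R : Set V} {d : ℕ} {μ μU μR : V → List (List ℕ)} {φ φU φR : V → WithTop ℤ} {v : V}

lemma isProgressMeasureOn_of_measureAt (h : ∀ v ∈ W, G.MeasureAt W d μ φ v) :
    G.IsProgressMeasureOn W d (· < ·) μ φ :=
  ⟨fun v hv => ⟨(h v hv).length, (h v hv).top, (h v hv).bound⟩,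
    fun v hv => (h v hv).dis, fun v hv => (h v hv).con⟩

namespace MeasureAt

lemma pri_le (h : G.MeasureAt W d μ φ v) : G.pri v ≤ d + 1 := by
  obtain ⟨l, -, hl, hd⟩ := h.length
  omega

lemma ne_nil (h : G.MeasureAt W d μ φ v) (hv : G.pri v < d) : μ v ≠ [] := fun hnil => by
  have := h.top (h.nil hnil)
  rw [hnil, List.length_nil] at this
  omega

lemma pad (g : ℕ) (h : G.MeasureAt W d μ φ v) :
    G.MeasureAt W (d + 2 * g) (pad g ∘ μ) φ v where
  length := by
    obtain ⟨l, hl, hpl, hd⟩ := h.length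
    exact ⟨l, hl, hpl, by simp only [Function.comp_apply, length_pad]; omega⟩
  top hφ := by
    have := h.top hφ
    simp only [Function.comp_apply, length_pad]
    omega
  bound := h.bound
  dis hv := by
    obtain ⟨u, hu, he, hp⟩ := h.dis hv
    exact ⟨u, hu, he, hp.pad g h.pri_le⟩
  con hv u hu he := (h.con hv u hu he).pad g h.pri_le
  nil hnil := h.nil (List.append_eq_nil_iff.1 hnil).2

lemma raise_of_subset [Finite V] (a : ℕ) (h : G.MeasureAt U d μU φU v) (hUW : U ⊆ W)
    (hμ : μ v = raise a (μU v)) (hφ : φ v = φU v)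
    (hdis : G.disOwns v → ∃ u ∈ W, G.edge v u ∧ G.Progressive d (· < ·) μ φ v u)
    (hcon : ¬ G.disOwns v → ∀ u ∈ W, G.edge v u → G.Progressive d (· < ·) μ φ v u) :
    G.MeasureAt W d μ φ v where
  length := by rw [hμ, length_raise]; exact h.length
  top hφv := by rw [hμ, length_raise]; exact h.top (hφ ▸ hφv)
  bound hφv := by
    rw [hφ] at hφv ⊢
    exact ⟨(h.bound hφv).1, (h.bound hφv).2.trans (coe_ncard_mul_maxCostOn_mono hUW)⟩
  dis := hdis
  con := hcon
  nil hnil := by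
    rw [hμ, raise_eq_nil] at hnil
    rw [hφ]
    exact h.nil hnil

end MeasureAt

lemma measureAt_raise_of_trap [Finite V] (a : ℕ) (hR : ∀ u ∈ R, G.MeasureAt R d μR φR u)
    (hRW : R ⊆ W) (htrap : G.TrapForConIn W R) (hμ : Set.EqOn μ (raise a ∘ μR) R)
    (hφ : Set.EqOn φ φR R) (hv : v ∈ R) : G.MeasureAt W d μ φ v := by
  have hlift : ∀ u ∈ R, G.Progressive d (· < ·) μR φR v u → G.Progressive d (· < ·) μ φ v u :=
    fun u hu h => (h.raise a).congr (hμ hv) (hμ hu) (hφ hv) (hφ hu)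
  refine (hR v hv).raise_of_subset a hRW (hμ hv) (hφ hv) (fun hdis => ?_) fun hcon u hu he => ?_
  · obtain ⟨u, hu, he, h⟩ := (hR v hv).dis hdis
    exact ⟨u, hRW hu, he, hlift u hu h⟩
  · have huR := (htrap v hv).1 hcon u hu he
    exact hlift u huR ((hR v hv).con hcon u huR he)

lemma measureAt_of_pri_eq (hd : Even d) (hv : G.pri v = d) (hsucc : ∃ u ∈ W, G.edge v u)
    (hμ : μ v = []) (hφ : φ v = ⊤) : G.MeasureAt W d μ φ v := by
  have hprog : ∀ u, G.Progressive d (· < ·) μ φ v u := fun _ => progressive_of_pri_eq hd hv hμ hφ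
  obtain ⟨u, hu, he⟩ := hsucc
  exact {
    length := ⟨d + 1, hd.add_one, by omega, by simp [hμ]⟩
    top := fun _ => by simp [hμ, hv]
    bound := fun h => absurd hφ h
    dis := fun _ => ⟨u, hu, he, hprog u⟩
    con := fun _ u _ _ => hprog u
    nil := fun _ => hφ }

lemma exists_measureAt_of_le {d' : ℕ} (hd : Even d) (hd' : Even d')
    (hle : U.Nonempty → d' ≤ d) (h : U.Nonempty → ∃ μ φ, ∀ v ∈ U, G.MeasureAt U d' μ φ v) :
    ∃ μ φ, ∀ v ∈ U, G.MeasureAt U d μ φ v := by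
  rcases U.eq_empty_or_nonempty with rfl | hU
  · exact ⟨fun _ => [], fun _ => ⊤, by simp⟩
  obtain ⟨μ, φ, hμ⟩ := h hU
  obtain ⟨g, rfl⟩ : ∃ g, d = d' + 2 * g := by
    have := hle hU
    rw [Nat.even_iff] at hd hd'
    exact ⟨(d - d') / 2, by omega⟩
  exact ⟨pad g ∘ μ, φ, fun v hv => (hμ v hv).pad g⟩

end Measure

section Attractor

variable {W Z T A : Set V} {τ : V → V} {rank : V → ℕ}

/-- The vertices from which `τ` forces a visit to `Z` within `i` moves in the subgame `W`. -/
def attrLevel (G : MPPGame V) (W Z : Set V) (τ : V → V) : ℕ → Set V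
  | 0 => Z
  | i + 1 => G.attrLevel W Z τ i ∪ {v | v ∈ W ∧ (G.disOwns v → τ v ∈ G.attrLevel W Z τ i) ∧
      (¬ G.disOwns v → ∀ u ∈ W, G.edge v u → u ∈ G.attrLevel W Z τ i)}

lemma attrLevel_mono : Monotone (G.attrLevel W Z τ) :=
  monotone_nat_of_le_succ fun _ => Set.subset_union_left

lemma exists_attrLevel_eq [Finite V] :
    ∃ n, ∀ m, n ≤ m → G.attrLevel W Z τ m = G.attrLevel W Z τ n :=
  (WellFoundedGT.monotone_chain_condition ⟨_, attrLevel_mono (G := G) (W := W) (Z := Z)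
    (τ := τ)⟩).imp fun _ h m hm => (h m hm).symm

lemma DisReach.subset_attrLevel {n : ℕ} (h : G.DisReach W T Z τ) (hTW : T ⊆ W)
    (hn : G.attrLevel W Z τ (n + 1) = G.attrLevel W Z τ n) : T ⊆ G.attrLevel W Z τ n := by
  intro v hvT
  by_contra hvL
  -- otherwise Con can keep the play outside the attractor, against `h`
  have hstep : ∀ x ∈ W \ G.attrLevel W Z τ n, ∃ y ∈ W \ G.attrLevel W Z τ n,
      G.edge x y ∧ (G.disOwns x → y = τ x) := by
    rintro x ⟨hxW, hxL⟩
    by_contra hno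
    refine hxL (hn ▸ Or.inr ⟨hxW, fun hd => ?_, fun hd u hu he => ?_⟩) <;> by_contra hL
    · exact hno ⟨τ x, ⟨(h.1 x hxW hd).2, hL⟩, (h.1 x hxW hd).1, fun _ => rfl⟩
    · exact hno ⟨u, ⟨hu, hL⟩, he, fun hd' => absurd hd' hd⟩
  obtain ⟨p, hp0, hp⟩ := exists_seq_of_forall_exists hstep ⟨hTW hvT, hvL⟩
  obtain ⟨i, hi⟩ := h.2 p ⟨fun i => (hp i).1.1, fun i => (hp i).2.1⟩ (hp0 ▸ hvT)
    fun i => (hp i).2.2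
  exact (hp i).1.2 (attrLevel_mono (Nat.zero_le n) hi)

structure IsAttractor (G : MPPGame V) (W Z A : Set V) (τ : V → V) (rank : V → ℕ) : Prop where
  subset : A ⊆ W
  disjoint : Disjoint A Z
  rank_pos : ∀ v ∈ A, 0 < rank v
  dis_step : ∀ v ∈ A, G.disOwns v → τ v ∈ Z ∨ τ v ∈ A ∧ rank (τ v) < rank v
  con_step : ∀ v ∈ A, ¬ G.disOwns v → ∀ u ∈ W, G.edge v u → u ∈ Z ∨ u ∈ A ∧ rank u < rank v

lemma DisReach.exists_attractor [Finite V] (h : G.DisReach W T Z τ) (hTW : T ⊆ W) :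
    ∃ A rank, G.IsAttractor W Z A τ rank ∧ T \ Z ⊆ A := by
  classical
  set L := G.attrLevel W Z τ
  obtain ⟨n, hn⟩ := exists_attrLevel_eq (G := G) (W := W) (Z := Z) (τ := τ)
  have hLn : ∀ i, L i ⊆ L n := fun i =>
    (le_total i n).elim (fun hi => attrLevel_mono hi) (fun hi => (hn i hi).le)
  let rank v := if h : ∃ i, v ∈ L i then Nat.find h else 0
  have hrank : ∀ v ∈ L n \ Z, ∃ j, rank v = j + 1 ∧ v ∈ W ∧ (G.disOwns v → τ v ∈ L j) ∧
      (¬ G.disOwns v → ∀ u ∈ W, G.edge v u → u ∈ L j) := by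
    rintro v ⟨hv, hvZ⟩
    have hex : ∃ i, v ∈ L i := ⟨n, hv⟩
    obtain ⟨j, hj⟩ : ∃ j, Nat.find hex = j + 1 :=
      Nat.exists_eq_succ_of_ne_zero fun h0 => hvZ (h0 ▸ Nat.find_spec hex :)
    have hmem := Nat.find_spec hex
    rw [hj] at hmem
    exact ⟨j, (dif_pos hex).trans hj, hmem.resolve_left (Nat.find_min hex (by omega))⟩
  have hlow : ∀ u j, u ∈ L j → u ∈ Z ∨ u ∈ L n \ Z ∧ rank u ≤ j := by
    intro u j hu
    refine or_iff_not_imp_left.2 fun huZ => ⟨⟨hLn j hu, huZ⟩, ?_⟩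
    rw [show rank u = Nat.find ⟨j, hu⟩ from dif_pos _]
    exact Nat.find_min' _ hu
  refine ⟨L n \ Z, rank, ⟨fun v hv => (hrank v hv).choose_spec.2.1, Set.disjoint_sdiff_left,
    fun v hv => by obtain ⟨j, hj, -⟩ := hrank v hv; omega, ?_, ?_⟩,
    fun v hv => ⟨h.subset_attrLevel hTW (hn (n + 1) n.le_succ) hv.1, hv.2⟩⟩
  · intro v hv hd
    obtain ⟨j, hj, -, hτ, -⟩ := hrank v hv
    exact (hlow _ j (hτ hd)).imp_right fun h => ⟨h.1, by omega⟩
  · intro v hv hd u hu he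
    obtain ⟨j, hj, -, -, hc⟩ := hrank v hv
    exact (hlow u j (hc hd u hu he)).imp_right fun h => ⟨h.1, by omega⟩

variable {d : ℕ} {μ : V → List (List ℕ)} {φ : V → WithTop ℤ} {v : V}

lemma measureAt_of_mem_attractor (hd : Even d) (hA : G.IsAttractor W Z A τ rank)
    (hτ : ∀ v ∈ W, G.disOwns v → G.edge v (τ v) ∧ τ v ∈ W) (hv : v ∈ A) (hpri : G.pri v < d)
    (hμA : ∀ u ∈ A, μ u = [[rank u]]) (hφ : φ v = 0) (hZ : ∀ u ∈ Z, (μ u).headI < [1]) :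
    G.MeasureAt W d μ φ v := by
  have hstep : ∀ u, u ∈ Z ∨ u ∈ A ∧ rank u < rank v → G.Progressive d (· < ·) μ φ v u := by
    refine fun u hu => progressive_of_headI_lt hpri (by simp [hμA v hv]) ?_
    rw [hμA v hv]
    rcases hu with hu | ⟨hu, hlt⟩
    · exact lt_singleton_of_le (hZ u hu) (hA.rank_pos v hv)
    · rw [hμA u hu]
      exact List.Lex.rel hlt
  exact {
    length := ⟨d - 1, Nat.Even.sub_odd (by omega) hd odd_one, by omega,
      by simp [hμA v hv]; omega⟩
    top := fun h => absurd (hφ ▸ h) WithTop.zero_ne_top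
    bound := fun _ => by
      rw [hφ]
      exact ⟨le_rfl, by exact_mod_cast Int.natCast_nonneg _⟩
    dis := fun hdis => ⟨τ v, (hτ v (hA.subset hv) hdis).2, (hτ v (hA.subset hv) hdis).1,
      hstep _ (hA.dis_step v hv hdis)⟩
    con := fun hcon u hu he => hstep u (hA.con_step v hv hcon u hu he)
    nil := fun h => by simp [hμA v hv] at h }

end Attractor

section Energy

variable {R W : Set V} {σ : V → V}

lemma meanPayoff_of_periodic {p : ℕ → V} {k : ℕ} (hk : 0 < k) (hp : ∀ t, p (t + k) = p t) :
    G.meanPayoff p = (∑ t ∈ range k, (G.cost (p t) (p (t + 1)) : ℝ)) / k :=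
  (Function.Periodic.tendsto_sum_range_div (h := fun t => (G.cost (p t) (p (t + 1)) : ℝ))
    (fun t => by simp only [add_right_comm t k 1, hp]) hk).limsup_eq

/-- A cycle of `σ`-moves in `R`, repeated forever, is a play consistent with `σ`; its mean
payoff is the cycle's average cost. -/
lemma DisMPWin.walkWeight_nonneg (h : G.DisMPWin R σ) {f : ℕ → V} {k : ℕ}
    (hf : IsWalk (fun x y => x ∈ R ∧ y ∈ R ∧ G.edge x y ∧ (G.disOwns x → y = σ x)) f k)
    (hfk : f k = f 0) : 0 ≤ walkWeight G.cost f k := by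
  rcases Nat.eq_zero_or_pos k with rfl | hk
  · simp [walkWeight]
  set p : ℕ → V := fun t => f (t % k)
  have hsucc : ∀ t, p (t + 1) = f (t % k + 1) := by
    intro t
    change f ((t + 1) % k) = _
    rw [← Nat.mod_add_mod]
    rcases Nat.lt_or_ge (t % k + 1) k with h | h
    · rw [Nat.mod_eq_of_lt h]
    · rw [show t % k + 1 = k by have := Nat.mod_lt t hk; omega, Nat.mod_self, hfk]
  have hstep : ∀ t, p t ∈ R ∧ p (t + 1) ∈ R ∧ G.edge (p t) (p (t + 1)) ∧
      (G.disOwns (p t) → p (t + 1) = σ (p t)) := fun t => by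
    rw [hsucc]
    exact hf (t % k) (Nat.mod_lt t hk)
  have hsum : ∑ t ∈ range k, (G.cost (p t) (p (t + 1)) : ℝ) = walkWeight G.cost f k := by
    rw [walkWeight, Int.cast_sum]
    refine sum_congr rfl fun t ht => ?_
    simp only [hsucc, p, Nat.mod_eq_of_lt (mem_range.1 ht)]
  have := h.2 p ⟨fun t => (hstep t).1, fun t => (hstep t).2.2.1⟩ fun t => (hstep t).2.2.2
  rw [meanPayoff_of_periodic hk fun t => by simp [p], hsum,
    le_div_iff₀ (by positivity), zero_mul] at this
  exact_mod_cast this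

structure IsEnergyPotential (G : MPPGame V) (R : Set V) (σ : V → V) (φ : V → ℤ) : Prop where
  nonneg : ∀ v ∈ R, 0 ≤ φ v
  le : ∀ v ∈ R, φ v ≤ (R.ncard * G.maxCostOn R : ℕ)
  le_add_cost : ∀ v ∈ R, ∀ u ∈ R, G.edge v u → (G.disOwns v → u = σ v) →
    φ u ≤ φ v + G.cost v u

lemma DisMPWin.exists_energyPotential [Finite V] (h : G.DisMPWin R σ) :
    ∃ φ, G.IsEnergyPotential R σ φ := by
  obtain ⟨φ, hφ⟩ := exists_potential_of_walkWeight_bdd (w := G.cost)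
    (r := fun x y => x ∈ R ∧ y ∈ R ∧ G.edge x y ∧ (G.disOwns x → y = σ x))
    (fun x y hxy => hxy.2.1)
    (neg_walkWeight_le (fun x y hxy => ⟨hxy.2.1, neg_maxCostOn_le_cost hxy.1 hxy.2.1 hxy.2.2.1⟩)
      fun f k hf hfk => h.walkWeight_nonneg hf hfk)
  exact ⟨φ, fun v hv => (hφ v hv).1, fun v hv => by exact_mod_cast (hφ v hv).2.1,
    fun v hv u hu he hσ => (hφ v hv).2.2 u ⟨hv, hu, he, hσ⟩⟩

variable {d : ℕ} {μ : V → List (List ℕ)} {φ : V → WithTop ℤ} {φR : V → ℤ} {v : V}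

lemma IsEnergyPotential.measureAt [Finite V] (hφR : G.IsEnergyPotential R σ φR) (hd : Even d)
    (hσ : ∀ v ∈ R, G.disOwns v → G.edge v (σ v) ∧ σ v ∈ R) (hRW : R ⊆ W)
    (htrap : G.TrapForConIn W R) (hμ : ∀ u ∈ R, μ u = [[0]]) (hφ : ∀ u ∈ R, φ u = φR u)
    (hv : v ∈ R) (hpri : G.pri v < d) : G.MeasureAt W d μ φ v := by
  have hprog : ∀ u ∈ R, G.edge v u → (G.disOwns v → u = σ v) →
      G.Progressive d (· < ·) μ φ v u := fun u hu he hσu =>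
    Or.inr (Or.inr ⟨by rw [hμ u hu, hμ v hv], by rw [hφ v hv]; exact WithTop.coe_ne_top,
      by rw [hφ v hv, hφ u hu]; exact_mod_cast hφR.le_add_cost v hv u hu he hσu⟩)
  exact {
    length := ⟨d - 1, Nat.Even.sub_odd (by omega) hd odd_one, by omega,
      by simp [hμ v hv]; omega⟩
    top := fun h => absurd (hφ v hv ▸ h) WithTop.coe_ne_top
    bound := fun _ => hφ v hv ▸ ⟨by exact_mod_cast hφR.nonneg v hv,
      (by exact_mod_cast hφR.le v hv : ((φR v : ℤ) : WithTop ℤ) ≤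
        ((R.ncard * G.maxCostOn R : ℕ) : ℤ)).trans (coe_ncard_mul_maxCostOn_mono hRW)⟩
    dis := fun hdis => ⟨σ v, hRW (hσ v hv hdis).2, (hσ v hv hdis).1,
      hprog _ (hσ v hv hdis).2 (hσ v hv hdis).1 fun _ => rfl⟩
    con := fun hcon u hu he =>
      hprog u ((htrap v hv).1 hcon u hu he) he fun hdis => absurd hdis hcon
    nil := fun h => by simp [hμ v hv] at h }

end Energy

section Gluing

variable {W Z A U : Set V} {τ : V → V} {d : ℕ} {μ μU : V → List (List ℕ)}
  {φ φU : V → WithTop ℤ} {v : V}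

lemma measureAt_raise_above [Finite V] (hU : ∀ u ∈ U, G.MeasureAt U d μU φU u) (hUW : U ⊆ W)
    (hv : v ∈ U) (hvA : v ∉ A) (hpri : G.pri v < d) {N : ℕ}
    (hμ : ∀ u ∈ U, u ∉ A → μ u = raise N (μU u)) (hφ : ∀ u ∈ U, u ∉ A → φ u = φU u)
    (hcover : ∀ u ∈ W, u ∉ Z → u ∉ A → u ∈ U)
    (hlow : ∀ u, u ∈ Z ∨ u ∈ A → (μ u).headI < [N]) : G.MeasureAt W d μ φ v := by
  have hne : μU v ≠ [] := (hU v hv).ne_nil hpri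
  have hlower : ∀ u, u ∈ Z ∨ u ∈ A → G.Progressive d (· < ·) μ φ v u := fun u hu =>
    progressive_of_headI_lt hpri (by rwa [hμ v hv hvA, Ne, raise_eq_nil])
      (by rw [hμ v hv hvA]; exact lt_headI_raise hne (hlow u hu))
  have hupper : ∀ u ∈ U, u ∉ A → G.Progressive d (· < ·) μU φU v u →
      G.Progressive d (· < ·) μ φ v u := fun u hu huA h =>
    (h.raise N).congr (hμ v hv hvA) (hμ u hu huA) (hφ v hv hvA) (hφ u hu huA)
  refine (hU v hv).raise_of_subset N hUW (hμ v hv hvA) (hφ v hv hvA) (fun hdis => ?_)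
    fun hcon u hu he => ?_
  · obtain ⟨u, hu, he, h⟩ := (hU v hv).dis hdis
    by_cases huA : u ∈ A
    · exact ⟨u, hUW hu, he, hlower u (Or.inr huA)⟩
    · exact ⟨u, hUW hu, he, hupper u hu huA h⟩
  · by_cases hZA : u ∈ Z ∨ u ∈ A
    · exact hlower u hZA
    · rw [not_or] at hZA
      have huU := hcover u hu hZA.1 hZA.2
      exact hupper u huU hZA.2 ((hU v hv).con hcon u huU he)

/-- Gluing along `W = X ∪ T ∪ Z`: `Z` keeps its labels, the `τ`-attractor of `Z` gets its ranks
as top components, and the rest, which lies in `X`, gets the measure of `X` raised above all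
ranks. -/
lemma exists_measureAt_of_partition [Finite V] {X T : Set V} (hd : Even d)
    (hpart : Partition3 W X T Z) (hreach : G.DisReach W T Z τ)
    (hpri : ∀ v ∈ W, v ∉ Z → G.pri v < d) (hX : ∃ μ φ, ∀ v ∈ X, G.MeasureAt X d μ φ v)
    (μZ : V → List (List ℕ)) (φZ : V → WithTop ℤ) (hZhead : ∀ v ∈ Z, (μZ v).headI < [1])
    (hZ : ∀ μ φ, Set.EqOn μ μZ Z → Set.EqOn φ φZ Z → ∀ v ∈ Z, G.MeasureAt W d μ φ v) :
    ∃ μ φ, ∀ v ∈ W, G.MeasureAt W d μ φ v := by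
  classical
  obtain ⟨hunion, -, hXZ, -⟩ := hpart
  have hXW : X ⊆ W := hunion ▸ Set.subset_union_left.trans Set.subset_union_left
  have hTW : T ⊆ W := hunion ▸ Set.subset_union_right.trans Set.subset_union_left
  obtain ⟨A, rank, hA, hTA⟩ := hreach.exists_attractor hTW
  obtain ⟨μX, φX, hμX⟩ := hX
  obtain ⟨N, hN⟩ : ∃ N, ∀ v, rank v < N := by
    obtain ⟨M, hM⟩ := (Set.finite_range rank).bddAbove
    exact ⟨M + 1, fun v => Nat.lt_succ_of_le (hM ⟨v, rfl⟩)⟩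
  set μ := Z.piecewise μZ (A.piecewise (fun v => [[rank v]]) (raise N ∘ μX))
  set φ := Z.piecewise φZ (A.piecewise 0 φX)
  have hAZ : ∀ u ∈ A, u ∉ Z := fun u hu => Set.disjoint_left.1 hA.disjoint hu
  have hXZ' : ∀ u ∈ X, u ∉ Z := fun u hu => Set.disjoint_left.1 hXZ hu
  have hμA : ∀ u ∈ A, μ u = [[rank u]] := fun u hu => by simp [μ, hu, hAZ u hu]
  have hcover : ∀ u ∈ W, u ∉ Z → u ∉ A → u ∈ X := by
    intro u hu huZ huA
    rw [← hunion] at hu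
    rcases hu with (hu | hu) | hu
    · exact hu
    · exact absurd (hTA ⟨hu, huZ⟩) huA
    · exact absurd hu huZ
  refine ⟨μ, φ, fun v hv => ?_⟩
  by_cases hvZ : v ∈ Z
  · exact hZ μ φ (Set.piecewise_eqOn _ _ _) (Set.piecewise_eqOn _ _ _) v hvZ
  by_cases hvA : v ∈ A
  · exact measureAt_of_mem_attractor hd hA hreach.1 hvA (hpri v hv hvZ) hμA
      (by simp [φ, hvZ, hvA]) fun u hu => by simpa [μ, hu] using hZhead u hu
  refine measureAt_raise_above hμX hXW (hcover v hv hvZ hvA) hvA (hpri v hv hvZ) (N := N)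
    (fun u hu huA => by simp [μ, hXZ' u hu, huA]) (fun u hu huA => by simp [φ, hXZ' u hu, huA])
    hcover fun u hu => ?_
  rcases hu with hu | hu
  · simpa [μ, hu] using lt_singleton_of_le (hZhead u hu) (Nat.one_le_of_lt (hN v))
  · rw [hμA u hu]
    exact List.Lex.rel (hN u)

lemma DisDecomp.exists_pri_eq {b : ℕ} (h : G.DisDecomp b W) : ∃ v ∈ W, G.pri v = b := by
  cases h with
  | even b b' W R T B τ hb hsub hpart hB hBne =>
    obtain ⟨v, hv⟩ := hBne
    rw [hB] at hv
    exact ⟨v, hv⟩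
  | oddRec b b' b'' W U T R τ hb hsub hpart htop htop' => exact htop'
  | oddMP b b'' W U T R τ σ hb hsub hpart htop htop' => exact htop'

lemma DisDecomp.exists_measureAt [Finite V] {b : ℕ} (h : G.DisDecomp b W) :
    ∃ μ φ, ∀ v ∈ W, G.MeasureAt W (evenCeil b) μ φ v := by
  induction h with
  | even b b' W R T B τ hb hsub hpart hB _ htop hreach hb' _ ihR =>
    have hBpri : ∀ v ∈ B, v ∈ W ∧ G.pri v = b := fun v hv => by rwa [hB] at hv
    rw [show evenCeil b = b by rw [evenCeil, Nat.even_iff.1 hb, add_zero]]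
    refine G.exists_measureAt_of_partition hb hpart hreach (fun v hv hvB => ?_)
      (exists_measureAt_of_le hb (even_evenCeil b') (fun hR => ?_) ihR) (fun _ => [])
      (fun _ => ⊤) (fun _ _ => List.nil_lt_cons _ _) fun μ φ hμ hφ v hv =>
        measureAt_of_pri_eq hb (hBpri v hv).2 (hsub.2 v (hBpri v hv).1) (hμ hv) (hφ hv)
    · have := htop v hv
      have : G.pri v ≠ b := fun h => hvB (by rw [hB]; exact ⟨hv, h⟩)
      omega
    · have := hb' hR
      rw [Nat.even_iff] at hb
      unfold evenCeil
      omega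
  | oddRec b b' b'' W U T R τ hb _ hpart htop _ _ htrap hb1 _ hreach hb2 _ ihR ihU =>
    rw [show evenCeil b = b + 1 by rw [evenCeil, Nat.odd_iff.1 hb]]
    have hle : ∀ c ≤ b, evenCeil c ≤ b + 1 := fun c hc => by unfold evenCeil; omega
    obtain ⟨μR, φR, hμR⟩ := exists_measureAt_of_le hb.add_one (even_evenCeil b')
      (fun _ => hle b' hb1.le) fun _ => ihR
    exact G.exists_measureAt_of_partition hb.add_one hpart hreach
      (fun v hv _ => Nat.lt_succ_of_le (htop v hv))
      (exists_measureAt_of_le hb.add_one (even_evenCeil b'') (fun hU => hle b'' (hb2 hU)) ihU)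
      (raise 0 ∘ μR) φR (fun _ _ => headI_raise_lt 0 _) fun μ φ hμ hφ v hv =>
        measureAt_raise_of_trap 0 hμR (hpart.1 ▸ Set.subset_union_right) htrap hμ hφ hv
  | oddMP b b'' W U T R τ σ hb _ hpart htop _ _ htrap hsig hreach hb2 _ ihU =>
    rw [show evenCeil b = b + 1 by rw [evenCeil, Nat.odd_iff.1 hb]]
    have hRW : R ⊆ W := hpart.1 ▸ Set.subset_union_right
    obtain ⟨φR, hφR⟩ := hsig.exists_energyPotential
    exact G.exists_measureAt_of_partition hb.add_one hpart hreach
      (fun v hv _ => Nat.lt_succ_of_le (htop v hv))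
      (exists_measureAt_of_le hb.add_one (even_evenCeil b'')
        (fun hU => by have := hb2 hU; unfold evenCeil; omega) ihU)
      (fun _ => [[0]]) (fun v => (φR v : WithTop ℤ)) (fun _ _ => List.Lex.rel Nat.one_pos)
      fun μ φ hμ hφ v hv => hφR.measureAt hb.add_one hsig.1 hRW htrap (fun _ hu => hμ hu)
        (fun _ hu => hφ hu) hv (Nat.lt_succ_of_le (htop v (hRW hv)))

end Gluing

end MPPGame

/-- If the whole vertex set, viewed as a subgame, has a
strategy decomposition for Dis, then there is a progress measure for the game
(over some linearly ordered set `M`), where priorities are bounded by the even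
number `d`. -/
theorem dis_decomposition_to_progress_measure
    {V : Type} [Fintype V] (G : MPPGame V)
    (d : ℕ) (hd : Even d) (hpri : ∀ v, G.pri v ≤ d)
    (hdec : ∃ b, G.DisDecomp b Set.univ) :
    ∃ (M : Type) (lt : M → M → Prop), IsStrictTotalOrder M lt ∧
      ∃ (μ : V → List M) (φ : V → WithTop ℤ),
        G.IsProgressMeasureOn Set.univ d lt μ φ := by
  obtain ⟨b, hdec⟩ := hdec
  obtain ⟨μ, φ, hμ⟩ := hdec.exists_measureAt
  obtain ⟨v, -, rfl⟩ := hdec.exists_pri_eq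
  obtain ⟨g, rfl⟩ : ∃ g, d = evenCeil (G.pri v) + 2 * g := by
    have := hpri v
    rw [Nat.even_iff] at hd
    exact ⟨(d - evenCeil (G.pri v)) / 2, by unfold evenCeil; omega⟩
  exact ⟨List ℕ, (· < ·), inferInstance, pad g ∘ μ, φ,
    MPPGame.isProgressMeasureOn_of_measureAt fun v _ => (hμ v trivial).pad g⟩
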